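/- arXiv:1909.11720 — 7 statements merged into one kernel-verified Lean document; each statement's English description precedes it below -/
import Mathlib

section
/- For every real d > 0, PR(d,0) = 1, and the function γ ↦ PR(d,γ) is differentiable at γ = 0 with derivative equal to -4/((d+2)(d+4)); in particular this derivative is strictly negative. -/
/-!
Write `PR d γ = A γ ^ (4 / (d + 4)) * B γ ^ (d / (d + 4))` with `A 0 = B 0 = 1`. At a point where
both bases equal `1`, the derivative of such a product is the weighted sum `p * A' + q * B'`.
Here `A' 0 = 0` because `A - 1` vanishes to second order, and `B' 0 = 2 / (d + 2) - 2 / d` is the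
logarithmic derivative of `B` at `0`.
-/

open Real

/-- The performance ratio of interpolated-NN (interpolation level `γ`) to standard k-NN
in dimension `d`. -/
noncomputable def PR (d γ : ℝ) : ℝ :=
  (1 + γ ^ 2 / (d * (d - 2 * γ))) ^ ((4 : ℝ) / (d + 4)) *
    ((d - γ) ^ 2 / (d + 2 - γ) ^ 2 * (d + 2) ^ 2 / d ^ 2) ^ (d / (d + 4))

theorem HasDerivAt.rpow_mul_rpow_of_eq_one {f g : ℝ → ℝ} {f' g' x : ℝ} (p q : ℝ)
    (hf : HasDerivAt f f' x) (hg : HasDerivAt g g' x) (hf1 : f x = 1) (hg1 : g x = 1) :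
    HasDerivAt (fun y => f y ^ p * g y ^ q) (p * f' + q * g') x := by
  have := (hf.rpow_const (p := p) (.inl (by simp [hf1]))).mul
    (hg.rpow_const (p := q) (.inl (by simp [hg1])))
  refine this.congr_deriv ?_
  rw [hf1, hg1]
  simp only [one_rpow, mul_one, one_mul]
  ring

theorem hasDerivAt_sq_div_zero {h : ℝ → ℝ} (hh : DifferentiableAt ℝ h 0) (h0 : h 0 ≠ 0) :
    HasDerivAt (fun x => x ^ 2 / h x) 0 0 := by
  refine ((hasDerivAt_pow 2 (0 : ℝ)).div hh.hasDerivAt h0).congr_deriv ?_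
  simp

theorem hasDerivAt_sub_sq_div_sub_sq {a b : ℝ} (ha : a ≠ 0) (hb : b ≠ 0) :
    HasDerivAt (fun x => (a - x) ^ 2 / (b - x) ^ 2 * b ^ 2 / a ^ 2) (2 / b - 2 / a) 0 := by
  have hsub (c : ℝ) : HasDerivAt (fun x => (c - x) ^ 2) (-(2 * c)) 0 := by
    simpa using ((hasDerivAt_id' (0 : ℝ)).const_sub c).fun_pow 2
  refine (((hsub a).div (hsub b) (by simpa)).mul_const (b ^ 2)).div_const (a ^ 2) |>.congr_deriv ?_
  field_simp
  ring

/-- For every real `d > 0`, `PR d 0 = 1`, the map `γ ↦ PR d γ` is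
differentiable at `0` with derivative `-4/((d+2)(d+4))`, and this derivative is
strictly negative. -/
theorem PR_eq_one_and_hasDerivAt_zero (d : ℝ) (hd : 0 < d) :
    PR d 0 = 1 ∧
      HasDerivAt (fun γ : ℝ => PR d γ) (-4 / ((d + 2) * (d + 4))) 0 ∧
      -4 / ((d + 2) * (d + 4)) < 0 := by
  have hA := (hasDerivAt_sq_div_zero (h := fun γ => d * (d - 2 * γ)) (by fun_prop)
    (by simp [hd.ne'])).const_add 1
  have hB := hasDerivAt_sub_sq_div_sub_sq hd.ne' (b := d + 2) (by positivity)
  have hB0 : (d - 0) ^ 2 / (d + 2 - 0) ^ 2 * (d + 2) ^ 2 / d ^ 2 = 1 := by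
    rw [sub_zero, sub_zero]
    field_simp
  have hPR := hA.rpow_mul_rpow_of_eq_one (4 / (d + 4)) (d / (d + 4)) hB (by simp) hB0
  refine ⟨by rw [PR, hB0]; simp, ?_, div_neg_of_neg_of_pos (by norm_num) (by positivity)⟩
  refine hPR.congr_deriv ?_
  field_simp
  ring
end

section
/- For every real d > 0 there exists γ_d ∈ (0, d/3] such that PR(d,γ) < 1 for all γ ∈ (0, γ_d); that is, a mild degree of data interpolation strictly improves over the un-interpolated k-NN at the level of multiplicative constants. -/
/-!
`PR d γ = A ^ (4 / (d + 4)) * (r ^ 2) ^ (d / (d + 4))` with a variance factor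
`A = 1 + γ² / (d (d - 2γ))` and a bias ratio `r = (d - γ)(d + 2) / ((d + 2 - γ) d) ∈ [0, 1]`.
As `r ^ 2 ≤ r`, weighted AM-GM bounds `PR d γ` by `(4 A + d r) / (d + 4)`. Interpolation costs
only `A - 1 = O(γ²)` in variance but gains `1 - r = 2γ / ((d + 2 - γ) d)`, of order `γ`, in bias,
so the bound is below `1` once `4 (d + 1) γ < d ²`.
-/

open Real

theorem rpow_mul_sq_rpow_le_weighted_mean {a r w₁ w₂ : ℝ} (ha : 0 ≤ a) (hr₀ : 0 ≤ r)
    (hr₁ : r ≤ 1) (hw₁ : 0 ≤ w₁) (hw₂ : 0 ≤ w₂) (hw : w₁ + w₂ = 1) :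
    a ^ w₁ * (r ^ 2) ^ w₂ ≤ w₁ * a + w₂ * r :=
  calc a ^ w₁ * (r ^ 2) ^ w₂ ≤ a ^ w₁ * r ^ w₂ := by gcongr; nlinarith
    _ ≤ w₁ * a + w₂ * r := geom_mean_le_arith_mean2_weighted hw₁ hw₂ ha hr₀ hw

noncomputable def varianceFactor (d γ : ℝ) : ℝ := 1 + γ ^ 2 / (d * (d - 2 * γ))

noncomputable def biasRatio (d γ : ℝ) : ℝ := (d - γ) * (d + 2) / ((d + 2 - γ) * d)

section

variable {d γ : ℝ}

theorem PR_eq_rpow_mul_rpow :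
    PR d γ = varianceFactor d γ ^ ((4 : ℝ) / (d + 4)) * (biasRatio d γ ^ 2) ^ (d / (d + 4)) := by
  rw [PR, varianceFactor, biasRatio, mul_div_assoc, div_mul_div_comm, ← mul_pow, ← mul_pow,
    ← div_pow]

theorem one_sub_biasRatio (hd : 0 < d) (hγ : γ < d + 2) :
    1 - biasRatio d γ = 2 * γ / ((d + 2 - γ) * d) := by
  have : d + 2 - γ ≠ 0 := by linarith
  rw [biasRatio]
  field_simp
  ring

theorem PR_le_weighted_mean (hd : 0 < d) (hγ₀ : 0 ≤ γ) (hγ : 2 * γ < d) :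
    PR d γ ≤ (4 * varianceFactor d γ + d * biasRatio d γ) / (d + 4) := by
  have hd2γ : 0 < d - 2 * γ := by linarith
  have hd2 : 0 < d + 2 - γ := by linarith
  have hr₀ : 0 ≤ biasRatio d γ := by
    have : 0 ≤ d - γ := by linarith
    rw [biasRatio]
    positivity
  have hr₁ : biasRatio d γ ≤ 1 := by
    have : 0 ≤ 2 * γ / ((d + 2 - γ) * d) := by positivity
    linarith [one_sub_biasRatio hd (by linarith : γ < d + 2)]
  rw [PR_eq_rpow_mul_rpow]
  refine (rpow_mul_sq_rpow_le_weighted_mean (by rw [varianceFactor]; positivity) hr₀ hr₁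
    (by positivity) (by positivity) (by rw [← add_div, add_comm, div_self (by positivity)])
    ).trans_eq (by ring)

theorem four_mul_varianceFactor_sub_one_lt (hd : 0 < d) (hγ₀ : 0 < γ)
    (hγ : 4 * (d + 1) * γ < d ^ 2) :
    4 * (varianceFactor d γ - 1) < d * (1 - biasRatio d γ) := by
  have hd2γ : 0 < d - 2 * γ := by nlinarith
  have hd2 : 0 < d + 2 - γ := by linarith
  rw [one_sub_biasRatio hd (by linarith), varianceFactor, add_sub_cancel_left,
    show d * (2 * γ / ((d + 2 - γ) * d)) = 2 * γ / (d + 2 - γ) by field_simp,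
    ← mul_div_assoc, div_lt_div_iff₀ (by positivity) hd2]
  nlinarith [mul_pos hγ₀ hγ₀, mul_pos (mul_pos hγ₀ hγ₀) hγ₀]

end

/-- For every real `d > 0` there exists `γ_d ∈ (0, d/3]` such that
`PR d γ < 1` for all `γ ∈ (0, γ_d)`: a mild degree of data interpolation strictly
improves over the un-interpolated k-NN at the level of multiplicative constants. -/
theorem PR_lt_one_of_small_gamma (d : ℝ) (hd : 0 < d) :
    ∃ γd : ℝ, 0 < γd ∧ γd ≤ d / 3 ∧ ∀ γ : ℝ, 0 < γ → γ < γd → PR d γ < 1 := by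
  have hd1 : 0 < 4 * (d + 1) := by linarith
  refine ⟨d ^ 2 / (4 * (d + 1)), by positivity, ?_, fun γ hγ₀ hγ => ?_⟩
  · rw [div_le_div_iff₀ hd1 (by norm_num)]
    nlinarith
  have hγd : 4 * (d + 1) * γ < d ^ 2 := by rwa [lt_div_iff₀' hd1] at hγ
  calc PR d γ ≤ (4 * varianceFactor d γ + d * biasRatio d γ) / (d + 4) :=
        PR_le_weighted_mean hd hγ₀.le (by nlinarith)
    _ < 1 := by
      rw [div_lt_one (by linarith)]
      linarith [four_mul_varianceFactor_sub_one_lt hd hγ₀ hγd]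
end

section
/- For every integer d ≥ 4 and every real γ with 0 < γ < d/3, PR(d,γ) < 1; that is, for dimension at least 4, interpolated-NN strictly improves over k-NN for every admissible interpolation level γ ∈ (0, d/3). -/
/-!
Writing `t = γ / d` and `x = 2γ / ((d - γ)(d + 2))`, the two bases in `PR d γ` are
`(1 - t)² / (1 - 2t)` and `(1 + x)⁻²`, so `PR d γ < 1` amounts to
`((1 - t)² / (1 - 2t))⁴ < (1 + x)^(2d)`. The right side is bounded below by the cubic binomial
truncation of `(1 + x)^(2d)`, which for `d ≥ 4` dominates a fixed cubic in
`d x ≥ 4t / (3(1 - t))`; what remains is a polynomial inequality in `t ∈ (0, 1/3]`.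
-/

open Real

lemma rpow_div_mul_rpow_div_lt_one {a b p q s : ℝ} (ha : 0 ≤ a) (hb : 0 ≤ b) (hs : 0 < s)
    (h : a ^ p * b ^ q < 1) : a ^ (p / s) * b ^ (q / s) < 1 := by
  rw [div_eq_mul_inv, div_eq_mul_inv, rpow_mul ha, rpow_mul hb,
    ← mul_rpow (by positivity) (by positivity)]
  exact rpow_lt_one (by positivity) h (inv_pos.mpr hs)

lemma one_add_sq_div_mul_sub_eq {d γ : ℝ} (hd : d ≠ 0) (hdγ : d - 2 * γ ≠ 0) :
    1 + γ ^ 2 / (d * (d - 2 * γ)) = (1 - γ / d) ^ 2 / (1 - 2 * (γ / d)) := by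
  rw [mul_div_assoc', one_sub_div hd, one_sub_div hd, div_pow, div_div_div_eq,
    one_add_div (mul_ne_zero hd hdγ),
    div_eq_div_iff (mul_ne_zero hd hdγ) (mul_ne_zero (pow_ne_zero 2 hd) hdγ)]
  ring

lemma sq_div_sq_mul_sq_div_sq_eq_inv {d γ : ℝ} (hd : d ≠ 0) (hd2 : d + 2 ≠ 0)
    (hdγ : d - γ ≠ 0) :
    (d - γ) ^ 2 / (d + 2 - γ) ^ 2 * (d + 2) ^ 2 / d ^ 2 =
      ((1 + 2 * γ / ((d - γ) * (d + 2))) ^ 2)⁻¹ := by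
  have hbase : 1 + 2 * γ / ((d - γ) * (d + 2)) = d * (d + 2 - γ) / ((d - γ) * (d + 2)) := by
    field_simp
    ring
  rw [hbase]
  field_simp

lemma one_add_cubic_le_one_add_pow {x : ℝ} (hx : 0 ≤ x) (n : ℕ) :
    1 + n * x + n * (n - 1) / 2 * x ^ 2 + n * (n - 1) * (n - 2) / 6 * x ^ 3 ≤ (1 + x) ^ n := by
  induction n with
  | zero => simp
  | succ n ih =>
    have hn : 0 ≤ (n : ℝ) * (n - 1) * (n - 2) := by
      rcases n with _ | _ | n
      · simp
      · simp
      · push_cast; nlinarith [sq_nonneg ((n : ℝ) + 1)]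
    have hstep := mul_le_mul_of_nonneg_right ih (by linarith : (0 : ℝ) ≤ 1 + x)
    rw [pow_succ (1 + x)]
    push_cast
    nlinarith [mul_nonneg hn (pow_nonneg hx 4)]

/-- The cubic binomial truncation of `(1 + c / 4) ^ 8`, i.e. of `(1 + x) ^ (2 * d)` at `d = 4`,
`c = d * x`. -/
noncomputable def binomialMinorant (c : ℝ) : ℝ := 1 + 2 * c + 7 / 4 * c ^ 2 + 7 / 8 * c ^ 3

lemma binomialMinorant_le_of_le {a b : ℝ} (ha : 0 ≤ a) (hab : a ≤ b) :
    binomialMinorant a ≤ binomialMinorant b := by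
  unfold binomialMinorant
  gcongr

lemma binomialMinorant_le_one_add_pow {d : ℕ} (hd : 4 ≤ d) {x : ℝ} (hx : 0 ≤ x) :
    binomialMinorant (d * x) ≤ (1 + x) ^ (2 * d) := by
  have hd4 : (4 : ℝ) ≤ d := by exact_mod_cast hd
  have hbinom := one_add_cubic_le_one_add_pow hx (2 * d)
  push_cast at hbinom
  unfold binomialMinorant
  have hd0 : (0 : ℝ) ≤ d := by linarith
  nlinarith [mul_nonneg (mul_nonneg hd0 (sub_nonneg.mpr hd4)) (sq_nonneg x),
    mul_nonneg (mul_nonneg hd0 (sq_nonneg ((d : ℝ) - 4))) (pow_nonneg hx 3),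
    mul_nonneg (mul_nonneg hd0 (sub_nonneg.mpr hd4)) (pow_nonneg hx 3)]

lemma pow_four_lt_binomialMinorant {t : ℝ} (ht0 : 0 < t) (ht : t ≤ 1 / 3) :
    ((1 - t) ^ 2 / (1 - 2 * t)) ^ 4 < binomialMinorant (4 * t / (3 * (1 - t))) := by
  have h1 : 0 < 1 - t := by linarith
  have h2 : 0 < 1 - 2 * t := by linarith
  have hsub : binomialMinorant (4 * t / (3 * (1 - t))) - ((1 - t) ^ 2 / (1 - 2 * t)) ^ 4 =
      ((1 - 2 * t) ^ 4 * (27 * (1 - t) ^ 3 + 72 * t * (1 - t) ^ 2 + 84 * t ^ 2 * (1 - t)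
        + 56 * t ^ 3) - 27 * (1 - t) ^ 11) / (27 * (1 - t) ^ 3 * (1 - 2 * t) ^ 4) := by
    unfold binomialMinorant
    field_simp
    ring
  -- the numerator, expanded in powers of `1/3 - t`, has only positive coefficients
  have hnum : (1 - 2 * t) ^ 4 * (27 * (1 - t) ^ 3 + 72 * t * (1 - t) ^ 2 + 84 * t ^ 2 * (1 - t)
        + 56 * t ^ 3) - 27 * (1 - t) ^ 11
      = 136 / 2187 * t + 6056 / 729 * (t * (1 / 3 - t)) + 350 / 3 * (t * (1 / 3 - t) ^ 2)
        + 17257 / 27 * (t * (1 / 3 - t) ^ 3) + 14353 / 9 * (t * (1 / 3 - t) ^ 4)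
        + 2067 * (t * (1 / 3 - t) ^ 5) + 2553 * (t * (1 / 3 - t) ^ 6)
        + 1563 * (t * (1 / 3 - t) ^ 7) + 729 * (t * (1 / 3 - t) ^ 8)
        + 207 * (t * (1 / 3 - t) ^ 9) + 27 * (t * (1 / 3 - t) ^ 10) := by
    ring
  have H : ∀ k : ℕ, 0 ≤ t * (1 / 3 - t) ^ k := fun k =>
    mul_nonneg ht0.le (pow_nonneg (by linarith) k)
  rw [← sub_pos, hsub, hnum]
  refine div_pos ?_ (by positivity)
  linarith [H 1, H 2, H 3, H 4, H 5, H 6, H 7, H 8, H 9, H 10]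

lemma four_mul_div_le_mul_two_mul_div {d γ : ℝ} (hd : 4 ≤ d) (hγ0 : 0 ≤ γ) (hγ : γ < d) :
    4 * (γ / d) / (3 * (1 - γ / d)) ≤ d * (2 * γ / ((d - γ) * (d + 2))) := by
  have hdγ : 0 < d - γ := by linarith
  have hlhs : 4 * (γ / d) / (3 * (1 - γ / d)) = 4 * γ / (3 * (d - γ)) := by
    field_simp
  rw [hlhs, mul_div_assoc', div_le_div_iff₀ (by positivity) (by positivity)]
  nlinarith [mul_nonneg (mul_nonneg hγ0 hdγ.le) (sub_nonneg.mpr hd)]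

/-- For every integer `d ≥ 4` and every real `γ` with `0 < γ < d/3`,
`PR d γ < 1`: in dimension at least 4, interpolated-NN strictly improves over k-NN for
every admissible interpolation level. -/
theorem PR_lt_one_of_dim_ge_four (d : ℕ) (hd : 4 ≤ d) (γ : ℝ)
    (hγ0 : 0 < γ) (hγ : γ < (d : ℝ) / 3) : PR d γ < 1 := by
  have hd4 : (4 : ℝ) ≤ d := by exact_mod_cast hd
  unfold PR
  rw [one_add_sq_div_mul_sub_eq (by positivity) (by linarith),
    sq_div_sq_mul_sq_div_sq_eq_inv (by positivity) (by positivity) (by linarith)]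
  set t := γ / d
  set x := 2 * γ / ((d - γ) * (d + 2))
  have ht0 : 0 < t := by positivity
  have ht : t ≤ 1 / 3 := by rw [div_le_iff₀ (by positivity)]; linarith
  have hx : 0 ≤ x := div_nonneg (by positivity) (mul_nonneg (by linarith) (by positivity))
  have key : ((1 - t) ^ 2 / (1 - 2 * t)) ^ 4 < (1 + x) ^ (2 * d) :=
    calc _ < binomialMinorant (4 * t / (3 * (1 - t))) := pow_four_lt_binomialMinorant ht0 ht
      _ ≤ binomialMinorant (d * x) :=
        binomialMinorant_le_of_le (div_nonneg (by positivity) (by linarith))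
          (four_mul_div_le_mul_two_mul_div hd4 hγ0.le (by linarith))
      _ ≤ _ := binomialMinorant_le_one_add_pow hd hx
  refine rpow_div_mul_rpow_div_lt_one (div_nonneg (sq_nonneg _) (by linarith)) (by positivity)
    (by positivity) ?_
  rw [show (4 : ℝ) = (4 : ℕ) by norm_num, rpow_natCast, rpow_natCast, inv_pow, ← pow_mul,
    ← div_eq_mul_inv, div_lt_one (by positivity)]
  exact key
end

section
/- The infimum over γ ∈ [0, d/3] of PR(d,γ) tends to 1 as d → ∞ (along positive integers d): for every ε > 0 there exists D such that for all integers d ≥ D and all real γ ∈ [0, d/3] one has PR(d,γ) > 1 − ε; combined with PR(d,0) = 1 this gives lim_{d→∞} inf_{γ∈[0,d/3]} PR(d,γ) = 1. Hence the gain from interpolation diminishes as the dimension grows. -/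
/-!
Write the second factor of `PR d γ` as `(1 - t) ^ 2` with `t = 2γ / ((d + 2 - γ) d)`. For
`γ ≤ d / 3` one has `0 ≤ t ≤ 1 / d`, so this base lies in `[0, 1]` and raising it to the power
`d / (d + 4) ≤ 1` can only increase it, while the first factor is at least `1`. Hence
`PR d γ ≥ (1 - t) ^ 2 ≥ 1 - 2 / d` uniformly in `γ ∈ [0, d / 3]`, and since `PR d 0 = 1` the
infimum is squeezed between `1 - 2 / d` and `1`.
-/

open Real Filter Topology

lemma PR_zero {d : ℝ} (hd : 0 < d) : PR d 0 = 1 := by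
  have hB : d ^ 2 / (d + 2) ^ 2 * (d + 2) ^ 2 / d ^ 2 = 1 := by
    field_simp
  simp [PR, hB]

lemma PR_second_factor_eq {d γ : ℝ} (hd : d ≠ 0) (hγ : d + 2 - γ ≠ 0) :
    (d - γ) ^ 2 / (d + 2 - γ) ^ 2 * (d + 2) ^ 2 / d ^ 2 =
      (1 - 2 * γ / ((d + 2 - γ) * d)) ^ 2 := by
  field_simp
  ring

lemma one_sub_two_div_le_PR {d γ : ℝ} (hd : 1 ≤ d) (hγ₀ : 0 ≤ γ) (hγ : γ ≤ d / 3) :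
    1 - 2 / d ≤ PR d γ := by
  have hd₀ : 0 < d := by linarith
  have hden : 0 < d + 2 - γ := by linarith
  set t := 2 * γ / ((d + 2 - γ) * d) with ht_def
  have ht₀ : 0 ≤ t := by positivity
  have ht : t ≤ 1 / d := by
    rw [div_le_div_iff₀ (by positivity) hd₀]
    nlinarith
  have ht₁ : t ≤ 1 := ht.trans ((div_le_one hd₀).2 hd)
  have hfirst : 1 ≤ (1 + γ ^ 2 / (d * (d - 2 * γ))) ^ ((4 : ℝ) / (d + 4)) := by
    have : 0 ≤ γ ^ 2 / (d * (d - 2 * γ)) := div_nonneg (sq_nonneg γ) (by nlinarith)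
    exact Real.one_le_rpow (by linarith) (by positivity)
  have hsecond : (1 - t) ^ 2 ≤ ((1 - t) ^ 2) ^ (d / (d + 4)) :=
    Real.self_le_rpow_of_le_one (sq_nonneg _) (pow_le_one₀ (by linarith) (by linarith))
      ((div_le_one (by linarith)).2 (by linarith))
  calc 1 - 2 / d = 1 - 2 * (1 / d) := by ring
    _ ≤ (1 - t) ^ 2 := by nlinarith [sq_nonneg t]
    _ ≤ ((1 - t) ^ 2) ^ (d / (d + 4)) := hsecond
    _ ≤ PR d γ := by
      rw [PR, PR_second_factor_eq hd₀.ne' (by linarith), ← ht_def]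
      exact le_mul_of_one_le_left (by positivity) hfirst

lemma sInf_PR_image_Icc_mem_Icc {d : ℝ} (hd : 1 ≤ d) :
    sInf ((fun γ => PR d γ) '' Set.Icc 0 (d / 3)) ∈ Set.Icc (1 - 2 / d) 1 := by
  have hd₀ : 0 < d := by linarith
  have hlower : 1 - 2 / d ∈ lowerBounds ((fun γ => PR d γ) '' Set.Icc 0 (d / 3)) := by
    rintro _ ⟨γ, hγ, rfl⟩
    exact one_sub_two_div_le_PR hd hγ.1 hγ.2
  have hmem : PR d 0 ∈ (fun γ => PR d γ) '' Set.Icc 0 (d / 3) :=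
    ⟨0, ⟨le_rfl, by positivity⟩, rfl⟩
  exact ⟨le_csInf ⟨_, hmem⟩ hlower, (csInf_le ⟨_, hlower⟩ hmem).trans (PR_zero hd₀).le⟩

lemma tendsto_one_sub_two_div_natCast :
    Tendsto (fun d : ℕ => 1 - 2 / (d : ℝ)) atTop (𝓝 1) := by
  simpa using tendsto_const_nhds.sub (tendsto_const_div_atTop_nhds_zero_nat (2 : ℝ))

/-- For every `ε > 0` there exists `D` such that for all integers `d ≥ D`
and all real `γ ∈ [0, d/3]` one has `PR d γ > 1 − ε`; combined with `PR d 0 = 1` this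
gives `lim_{d→∞} inf_{γ ∈ [0, d/3]} PR d γ = 1`: the gain from interpolation diminishes
as the dimension grows. -/
theorem PR_inf_tendsto_one :
    (∀ ε : ℝ, 0 < ε → ∃ D : ℕ, ∀ d : ℕ, D ≤ d →
      ∀ γ : ℝ, γ ∈ Set.Icc (0 : ℝ) ((d : ℝ) / 3) → 1 - ε < PR d γ) ∧
    (∀ d : ℕ, 0 < d → PR (d : ℝ) 0 = 1) ∧
    Tendsto (fun d : ℕ => sInf ((fun γ : ℝ => PR d γ) '' Set.Icc (0 : ℝ) ((d : ℝ) / 3)))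
      atTop (nhds 1) := by
  have hd_one : ∀ᶠ d : ℕ in atTop, 1 ≤ (d : ℝ) :=
    (eventually_ge_atTop 1).mono fun d hd => by exact_mod_cast hd
  refine ⟨fun ε hε => ?_, fun d hd => PR_zero (Nat.cast_pos.2 hd), ?_⟩
  · have hε_lt : ∀ᶠ d : ℕ in atTop, 1 - ε < 1 - 2 / (d : ℝ) :=
      tendsto_one_sub_two_div_natCast.eventually (lt_mem_nhds (by linarith))
    obtain ⟨D, hD⟩ := eventually_atTop.1 (hε_lt.and hd_one)
    exact ⟨D, fun d hdD γ hγ =>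
      (hD d hdD).1.trans_le (one_sub_two_div_le_PR (hD d hdD).2 hγ.1 hγ.2)⟩
  · refine tendsto_of_tendsto_of_tendsto_of_le_of_le' tendsto_one_sub_two_div_natCast
      tendsto_const_nhds ?_ ?_
    · exact hd_one.mono fun d hd => (sInf_PR_image_Icc_mem_Icc hd).1
    · exact hd_one.mono fun d hd => (sInf_PR_image_Icc_mem_Icc hd).2
end

section
/- Let Z be a real-valued random variable with E[Z²] < ∞ and cumulative distribution function G(t) = P(Z ≤ t). For any real a and any real b > 0, the function u ↦ u·[G(−bu − a) − 1{u < 0}] is integrable over ℝ and ∫_ℝ u·[G(−bu − a) − 1{u < 0}] du = (1/b²)·( a²/2 + E[Z²]/2 + a·E[Z] ). -/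
/-!
Writing `W = (-a - Z) / b`, the event `Z ≤ -b u - a` is `u ≤ W`, so the integrand is
`u * (P(u ≤ W) - 1{u < 0}) = E[signedLayer W u]`. For fixed `w` the function `signedLayer w` is `|u|`
on the interval between `0` and `w`, so it is nonnegative with integral `w² / 2`.
Tonelli then turns the integral of the integrand into `E[W²] / 2`, and expanding the square gives the
formula.
-/

open MeasureTheory Set
open scoped Interval

noncomputable def signedLayer (w u : ℝ) : ℝ :=
  u * ((if u ≤ w then 1 else 0) - if u < 0 then 1 else 0)

theorem signedLayer_eq_indicator_abs (w : ℝ) : signedLayer w = (Ι 0 w).indicator (|·|) := by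
  ext u
  simp only [signedLayer, indicator, mem_uIoc]
  split_ifs <;> grind

theorem signedLayer_nonneg (w u : ℝ) : 0 ≤ signedLayer w u := by
  rw [signedLayer_eq_indicator_abs]
  exact indicator_nonneg (fun u _ => abs_nonneg u) u

theorem measurable_signedLayer : Measurable (Function.uncurry signedLayer) := by
  refine measurable_snd.mul (.sub ?_ ?_) <;> refine .ite ?_ measurable_const measurable_const
  · exact measurableSet_le measurable_snd measurable_fst
  · exact measurable_snd measurableSet_Iio

theorem setIntegral_uIoc_zero_abs (w : ℝ) : ∫ u in Ι 0 w, |u| = w ^ 2 / 2 := by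
  rcases le_total 0 w with hw | hw
  · rw [uIoc_of_le hw, setIntegral_congr_fun measurableSet_Ioc (fun u hu => abs_of_pos hu.1),
      ← intervalIntegral.integral_of_le hw, integral_id]
    ring
  · rw [uIoc_of_ge hw, setIntegral_congr_fun measurableSet_Ioc (fun u hu => abs_of_nonpos hu.2),
      integral_neg, ← intervalIntegral.integral_of_le hw, integral_id]
    ring

theorem lintegral_ofReal_signedLayer (w : ℝ) :
    ∫⁻ u, ENNReal.ofReal (signedLayer w u) = ENNReal.ofReal (w ^ 2 / 2) := by
  rw [← setIntegral_uIoc_zero_abs, ofReal_integral_eq_lintegral_ofReal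
    continuous_abs.integrableOn_uIoc (.of_forall fun u => abs_nonneg u),
    ← lintegral_indicator measurableSet_uIoc, signedLayer_eq_indicator_abs]
  congr with u
  exact congrFun (indicator_comp_of_zero ENNReal.ofReal_zero).symm u

section RandomVariable

variable {Ω : Type*} [MeasurableSpace Ω] {μ : Measure Ω} {W : Ω → ℝ}

theorem integrable_signedLayer [IsFiniteMeasure μ] (hW : Measurable W) (u : ℝ) :
    Integrable (fun ω => signedLayer (W ω) u) μ :=
  (((integrable_const 1).indicator (measurableSet_le measurable_const hW)).sub
    (integrable_const _)).const_mul u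

theorem integral_signedLayer [IsProbabilityMeasure μ] (hW : Measurable W) (u : ℝ) :
    ∫ ω, signedLayer (W ω) u ∂μ = u * (μ.real {ω | u ≤ W ω} - if u < 0 then 1 else 0) := by
  have hle : MeasurableSet {ω | u ≤ W ω} := measurableSet_le measurable_const hW
  unfold signedLayer
  rw [integral_const_mul, integral_sub ((integrable_const 1).indicator hle) (integrable_const _),
    integral_const, probReal_univ, one_smul]
  congr 2
  exact integral_indicator_one hle

theorem mul_measureReal_le_sub_nonneg [IsProbabilityMeasure μ] (u : ℝ) :
    0 ≤ u * (μ.real {ω | u ≤ W ω} - if u < 0 then 1 else 0) := by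
  split_ifs with hu
  · exact mul_nonneg_of_nonpos_of_nonpos hu.le (sub_nonpos.2 measureReal_le_one)
  · exact mul_nonneg (not_lt.1 hu) (by simp)

theorem measurable_mul_measureReal_le_sub [IsFiniteMeasure μ] :
    Measurable fun u : ℝ => u * (μ.real {ω | u ≤ W ω} - if u < 0 then 1 else 0) := by
  have hanti : Antitone fun u : ℝ => μ.real {ω | u ≤ W ω} :=
    fun s t hst => measureReal_mono fun ω h => hst.trans h
  exact measurable_id.mul (hanti.measurable.sub (.ite measurableSet_Iio measurable_const
    measurable_const))

theorem lintegral_ofReal_mul_measureReal_le_sub [IsProbabilityMeasure μ] (hW : Measurable W) :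
    ∫⁻ u, ENNReal.ofReal (u * (μ.real {ω | u ≤ W ω} - if u < 0 then 1 else 0)) =
      ∫⁻ ω, ENNReal.ofReal (W ω ^ 2 / 2) ∂μ := by
  have hmeas : Measurable fun p : ℝ × Ω => ENNReal.ofReal (signedLayer (W p.2) p.1) :=
    ENNReal.measurable_ofReal.comp
      (measurable_signedLayer.comp ((hW.comp measurable_snd).prodMk measurable_fst))
  calc _ = ∫⁻ u, ∫⁻ ω, ENNReal.ofReal (signedLayer (W ω) u) ∂μ := by
        congr with u
        rw [← integral_signedLayer hW, ofReal_integral_eq_lintegral_ofReal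
          (integrable_signedLayer hW u) (.of_forall fun ω => signedLayer_nonneg _ _)]
    _ = ∫⁻ ω, (∫⁻ u, ENNReal.ofReal (signedLayer (W ω) u)) ∂μ :=
        lintegral_lintegral_swap hmeas.aemeasurable
    _ = _ := by simp_rw [lintegral_ofReal_signedLayer]

theorem integrable_mul_measureReal_le_sub [IsProbabilityMeasure μ] (hW : Measurable W)
    (hW2 : Integrable (fun ω => W ω ^ 2) μ) :
    Integrable fun u : ℝ => u * (μ.real {ω | u ≤ W ω} - if u < 0 then 1 else 0) := by
  refine ⟨measurable_mul_measureReal_le_sub.aestronglyMeasurable, ?_⟩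
  rw [hasFiniteIntegral_iff_ofReal (.of_forall mul_measureReal_le_sub_nonneg),
    lintegral_ofReal_mul_measureReal_le_sub hW]
  exact (hW2.div_const 2).lintegral_lt_top

theorem integral_mul_measureReal_le_sub [IsProbabilityMeasure μ] (hW : Measurable W) :
    ∫ u, u * (μ.real {ω | u ≤ W ω} - if u < 0 then 1 else 0) = ∫ ω, W ω ^ 2 / 2 ∂μ := by
  rw [integral_eq_lintegral_of_nonneg_ae (.of_forall mul_measureReal_le_sub_nonneg)
      measurable_mul_measureReal_le_sub.aestronglyMeasurable,
    integral_eq_lintegral_of_nonneg_ae (.of_forall fun ω => by positivity)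
      (by fun_prop : Measurable fun ω => W ω ^ 2 / 2).aestronglyMeasurable,
    lintegral_ofReal_mul_measureReal_le_sub hW]

end RandomVariable

/-- Let `Z` be a real random variable with `E[Z²] < ∞` and c.d.f.
`G t = P(Z ≤ t)`. For any real `a` and any real `b > 0`, the function
`u ↦ u·(G(−bu − a) − 1{u < 0})` is integrable over `ℝ` and
`∫ u, u·(G(−bu − a) − 1{u < 0}) du = (1/b²)·(a²/2 + E[Z²]/2 + a·E[Z])`. -/
theorem integral_mul_cdf_shift {Ω : Type*} [MeasurableSpace Ω] (μ : Measure Ω)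
    [IsProbabilityMeasure μ] (Z : Ω → ℝ) (hZmeas : Measurable Z)
    (hZsq : Integrable (fun ω => (Z ω) ^ 2) μ) (a b : ℝ) (hb : 0 < b)
    (G : ℝ → ℝ) (hG : ∀ t : ℝ, G t = (μ {ω | Z ω ≤ t}).toReal) :
    Integrable (fun u : ℝ => u * (G (-b * u - a) - (if u < 0 then (1 : ℝ) else 0)))
      volume ∧
      ∫ u : ℝ, u * (G (-b * u - a) - (if u < 0 then (1 : ℝ) else 0)) =
        (1 / b ^ 2) * (a ^ 2 / 2 + (∫ ω, (Z ω) ^ 2 ∂μ) / 2 + a * ∫ ω, Z ω ∂μ) := by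
  set W : Ω → ℝ := fun ω => (-a - Z ω) / b
  have hW : Measurable W := (measurable_const.sub hZmeas).div_const b
  have hGW (u : ℝ) : G (-b * u - a) = μ.real {ω | u ≤ W ω} := by
    rw [hG, measureReal_def]
    congr 2
    ext ω
    simp only [mem_ofPred_eq, W, le_div_iff₀ hb]
    constructor <;> intro <;> linarith
  have hZ : Integrable Z μ :=
    ((memLp_two_iff_integrable_sq hZmeas.aestronglyMeasurable).2 hZsq).integrable one_le_two
  have hZaff : Integrable (fun ω => a ^ 2 + 2 * a * Z ω) μ :=
    (integrable_const _).add (hZ.const_mul _)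
  have hsq : (fun ω => W ω ^ 2) = fun ω => (a ^ 2 + 2 * a * Z ω + Z ω ^ 2) / b ^ 2 := by
    ext ω
    simp only [W]
    field_simp
    ring
  simp_rw [hGW]
  refine ⟨integrable_mul_measureReal_le_sub hW (hsq ▸ (hZaff.add hZsq).div_const _), ?_⟩
  rw [integral_mul_measureReal_le_sub hW, integral_div, hsq, integral_div,
    integral_add hZaff hZsq,
    integral_add (integrable_const _) (hZ.const_mul _), integral_const, integral_const_mul,
    probReal_univ, one_smul]
  ring
end

section
/- For every real d > 0, 2^{4/(d+4)} · ((d+2)/(d+4))^{(2d+4)/(d+4)} < 1. Equivalently, (2d+4)·log(1 + 2/(d+2)) > 4·log 2 for every d > 0. -/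
open Real

lemma ownn_key (d : ℝ) (hd : 0 < d) :
    (2 * d + 4) * Real.log (1 + 2 / (d + 2)) > 4 * Real.log 2 := by
  have h2 : (0:ℝ) < d + 2 := by linarith
  have ha : (0:ℝ) < 2 / (d + 2) := by positivity
  have hb : (0:ℝ) < d / (d + 2) := by positivity
  have hab : 2 / (d + 2) + d / (d + 2) = 1 := by field_simp; ring
  have hkey := strictConcaveOn_log_Ioi.2 (Set.mem_Ioi.2 (by norm_num : (0:ℝ) < 2))
      (Set.mem_Ioi.2 (by norm_num : (0:ℝ) < 1)) (by norm_num) ha hb hab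
  simp only [smul_eq_mul, Real.log_one, mul_one, mul_zero, add_zero] at hkey
  have hcomb : 2 / (d + 2) * 2 + d / (d + 2) = 1 + 2 / (d + 2) := by
    field_simp; ring
  rw [hcomb] at hkey
  have hmul := mul_lt_mul_of_pos_left hkey h2
  have hsimp : (d + 2) * (2 / (d + 2) * Real.log 2) = 2 * Real.log 2 := by
    field_simp
  nlinarith [hmul, hsimp]

/-- For every real `d > 0`,
`2^{4/(d+4)} · ((d+2)/(d+4))^{(2d+4)/(d+4)} < 1`; equivalently,
`(2d+4)·log(1 + 2/(d+2)) > 4·log 2`. (OWNN strictly improves over k-NN at the level of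
multiplicative constants in every dimension.) -/
theorem ownn_ratio_lt_one (d : ℝ) (hd : 0 < d) :
    (2 : ℝ) ^ ((4 : ℝ) / (d + 4)) * ((d + 2) / (d + 4)) ^ ((2 * d + 4) / (d + 4)) < 1 ∧
      (2 * d + 4) * Real.log (1 + 2 / (d + 2)) > 4 * Real.log 2 := by
  have hkey := ownn_key d hd
  refine ⟨?_, hkey⟩
  have h2 : (0:ℝ) < d + 2 := by linarith
  have h4 : (0:ℝ) < d + 4 := by linarith
  have hq : (0:ℝ) < (d + 2) / (d + 4) := by positivity
  have hx : (0:ℝ) < (2 : ℝ) ^ ((4 : ℝ) / (d + 4)) * ((d + 2) / (d + 4)) ^ ((2 * d + 4) / (d + 4)) := by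
    positivity
  rw [← Real.log_neg_iff hx]
  rw [Real.log_mul (by positivity) (by positivity),
      Real.log_rpow (by norm_num), Real.log_rpow hq]
  have hlogq : Real.log ((d + 2) / (d + 4)) = - Real.log (1 + 2 / (d + 2)) := by
    have h1 : 1 + 2 / (d + 2) = (d + 4) / (d + 2) := by field_simp; ring
    rw [h1, Real.log_div (by positivity) (by positivity),
        Real.log_div (by positivity) (by positivity)]
    ring
  rw [hlogq]
  have hpos : 0 < (2 * d + 4) * Real.log (1 + 2 / (d + 2)) - 4 * Real.log 2 := by linarith
  have : (4 : ℝ) / (d + 4) * Real.log 2 + (2 * d + 4) / (d + 4) * -Real.log (1 + 2 / (d + 2))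
      = -(( (2 * d + 4) * Real.log (1 + 2 / (d + 2)) - 4 * Real.log 2) / (d + 4)) := by
    field_simp
    ring
  rw [this]
  have : 0 < ((2 * d + 4) * Real.log (1 + 2 / (d + 2)) - 4 * Real.log 2) / (d + 4) := by
    positivity
  linarith
end

section
/- The function d ↦ 2^{4/(d+4)} · ((d+2)/(d+4))^{(2d+4)/(d+4)} tends to 1 as d → ∞. Combined with the fact that inf_{γ∈[0,d/3]} PR(d,γ) → 1 as d → ∞, this shows that the asymptotic risk ratio R(n, OWNN)/R(n, γ) = 2^{4/(d+4)}·((d+2)/(d+4))^{(2d+4)/(d+4)}·PR(d,γ)^{−1} tends to 1 as d → ∞: in high dimensions the performance differences among k-NN, interpolated-NN and OWNN become negligible even at the multiplicative-constant level. -/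
open Real Filter

/-!
Both exponents `4/(d+4)` and `(2d+4)/(d+4) - 2` vanish as `d → ∞` and `(d+2)/(d+4) → 1`, so the
OWNN ratio tends to `1`. For `γ ∈ [0, d/3]` the first factor of `PR d γ` has base in `[1, 4/3]`
and the second has base `r²` with `1 - 1/d ≤ r ≤ 1`, so `PR d γ` is squeezed between
`(1 - 1/d)²` and `(4/3)^{4/(d+4)}`, bounds that do not depend on `γ` and both tend to `1`.
-/

open scoped Topology

noncomputable def ownnRatio (d : ℝ) : ℝ :=
  2 ^ ((4 : ℝ) / (d + 4)) * ((d + 2) / (d + 4)) ^ ((2 * d + 4) / (d + 4))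

lemma tendsto_const_div_add_atTop (c a : ℝ) :
    Tendsto (fun d : ℝ => c / (d + a)) atTop (𝓝 0) :=
  tendsto_const_nhds.div_atTop (tendsto_atTop_add_const_right _ a tendsto_id)

lemma tendsto_rpow_const_div_add_atTop {b : ℝ} (hb : b ≠ 0) (c a : ℝ) :
    Tendsto (fun d : ℝ => b ^ (c / (d + a))) atTop (𝓝 1) := by
  have h := (continuousAt_const_rpow hb (b := 0)).tendsto.comp (tendsto_const_div_add_atTop c a)
  rwa [rpow_zero] at h

lemma tendsto_add_div_add_atTop (a b : ℝ) :
    Tendsto (fun d : ℝ => (d + a) / (d + b)) atTop (𝓝 1) := by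
  have h : Tendsto (fun d : ℝ => 1 + (a - b) / (d + b)) atTop (𝓝 1) := by
    simpa using (tendsto_const_div_add_atTop (a - b) b).const_add 1
  refine h.congr' ?_
  filter_upwards [eventually_gt_atTop (-b)] with d hd
  field_simp [show d + b ≠ 0 by linarith]
  ring

theorem tendsto_ownnRatio : Tendsto ownnRatio atTop (𝓝 1) := by
  have hbase := tendsto_add_div_add_atTop 2 4
  have hexp : Tendsto (fun d : ℝ => (2 * d + 4) / (d + 4)) atTop (𝓝 2) := by
    convert hbase.const_mul 2 using 1
    · ext d; ring
    · simp
  have h := (tendsto_rpow_const_div_add_atTop two_ne_zero 4 4).mul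
    (hbase.rpow hexp (Or.inl one_ne_zero))
  rwa [one_rpow, mul_one] at h

section PRBounds

variable {d γ : ℝ}

lemma PR_base_left_mem_Icc (hd : 0 < d) (hγ0 : 0 ≤ γ) (hγ : γ ≤ d / 3) :
    1 + γ ^ 2 / (d * (d - 2 * γ)) ∈ Set.Icc 1 (4 / 3) := by
  have hden : 0 < d * (d - 2 * γ) := mul_pos hd (by linarith)
  refine ⟨le_add_of_nonneg_right (by positivity), ?_⟩
  have : γ ^ 2 / (d * (d - 2 * γ)) ≤ 1 / 3 := by
    rw [div_le_iff₀ hden]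
    nlinarith
  linarith

lemma PR_base_right_mem_Icc (hd : 1 ≤ d) (hγ0 : 0 ≤ γ) (hγ : γ ≤ d / 3) :
    (d - γ) ^ 2 / (d + 2 - γ) ^ 2 * (d + 2) ^ 2 / d ^ 2 ∈ Set.Icc ((1 - d⁻¹) ^ 2) 1 := by
  have hd0 : 0 < d := by linarith
  have hden : 0 < (d + 2 - γ) * d := mul_pos (by linarith) hd0
  set r := (d - γ) * (d + 2) / ((d + 2 - γ) * d)
  have hsq : (d - γ) ^ 2 / (d + 2 - γ) ^ 2 * (d + 2) ^ 2 / d ^ 2 = r ^ 2 := by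
    simp only [r]
    field_simp
  -- `r = 1 - 2γ / ((d + 2 - γ) d)`, and `3γ ≤ d + 2` bounds the defect by `1/d`.
  have hr_le : r ≤ 1 := by
    rw [div_le_one hden]
    nlinarith
  have hr_ge : 1 - d⁻¹ ≤ r := by
    rw [le_div_iff₀ hden]
    field_simp
    nlinarith
  have hlow : 0 ≤ 1 - d⁻¹ := sub_nonneg.mpr (inv_le_one_of_one_le₀ hd)
  rw [hsq]
  exact ⟨pow_le_pow_left₀ hlow hr_ge 2, pow_le_one₀ (hlow.trans hr_ge) hr_le⟩

lemma PR_le_four_thirds_rpow (hd : 1 ≤ d) (hγ0 : 0 ≤ γ) (hγ : γ ≤ d / 3) :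
    PR d γ ≤ (4 / 3) ^ ((4 : ℝ) / (d + 4)) := by
  obtain ⟨hA1, hA⟩ := PR_base_left_mem_Icc (by linarith) hγ0 hγ
  obtain ⟨hB0, hB⟩ := PR_base_right_mem_Icc hd hγ0 hγ
  calc PR d γ ≤ (4 / 3) ^ ((4 : ℝ) / (d + 4)) * 1 := by
        refine mul_le_mul (rpow_le_rpow (by linarith) hA (by positivity))
          (rpow_le_one ((sq_nonneg _).trans hB0) hB (by positivity)) (by positivity)
          (by positivity)
    _ = (4 / 3) ^ ((4 : ℝ) / (d + 4)) := mul_one _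

lemma one_sub_inv_sq_le_PR (hd : 1 ≤ d) (hγ0 : 0 ≤ γ) (hγ : γ ≤ d / 3) :
    (1 - d⁻¹) ^ 2 ≤ PR d γ := by
  obtain ⟨hA1, -⟩ := PR_base_left_mem_Icc (by linarith) hγ0 hγ
  obtain ⟨hB0, hB⟩ := PR_base_right_mem_Icc hd hγ0 hγ
  have hB_nonneg := (sq_nonneg _).trans hB0
  calc (1 - d⁻¹) ^ 2
      ≤ (d - γ) ^ 2 / (d + 2 - γ) ^ 2 * (d + 2) ^ 2 / d ^ 2 := hB0
    _ ≤ ((d - γ) ^ 2 / (d + 2 - γ) ^ 2 * (d + 2) ^ 2 / d ^ 2) ^ (d / (d + 4)) :=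
        self_le_rpow_of_le_one hB_nonneg hB (div_le_one_of_le₀ (by linarith) (by linarith))
    _ ≤ PR d γ := le_mul_of_one_le_left (by positivity) (one_le_rpow hA1 (by positivity))

end PRBounds

lemma eventually_abs_mul_inv_sub_one_lt {ι : Type*} {l : Filter ι} {f lo hi : ι → ℝ}
    (hf : Tendsto f l (𝓝 1)) (hlo : Tendsto lo l (𝓝 1)) (hhi : Tendsto hi l (𝓝 1))
    {ε : ℝ} (hε : 0 < ε) :
    ∀ᶠ n in l, ∀ x, lo n ≤ x → x ≤ hi n → |f n * x⁻¹ - 1| < ε := by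
  have hflo := hf.mul (hlo.inv₀ one_ne_zero)
  have hfhi := hf.mul (hhi.inv₀ one_ne_zero)
  simp only [inv_one, mul_one] at hflo hfhi
  filter_upwards [hf.eventually (lt_mem_nhds zero_lt_one),
    hlo.eventually (lt_mem_nhds zero_lt_one),
    hflo.eventually (gt_mem_nhds (lt_add_of_pos_right 1 hε)),
    hfhi.eventually (lt_mem_nhds (sub_lt_self 1 hε))] with n hf0 hlo0 hup hdown x hx hx'
  have hx0 : 0 < x := hlo0.trans_le hx
  have h1 : f n * x⁻¹ ≤ f n * (lo n)⁻¹ :=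
    mul_le_mul_of_nonneg_left (inv_anti₀ hlo0 hx) hf0.le
  have h2 : f n * (hi n)⁻¹ ≤ f n * x⁻¹ :=
    mul_le_mul_of_nonneg_left (inv_anti₀ hx0 hx') hf0.le
  rw [abs_lt]
  constructor <;> linarith

lemma eventually_abs_ownnRatio_mul_inv_PR_sub_one_lt {ε : ℝ} (hε : 0 < ε) :
    ∀ᶠ d : ℝ in atTop, ∀ γ ∈ Set.Icc 0 (d / 3), |ownnRatio d * (PR d γ)⁻¹ - 1| < ε := by
  have hlo : Tendsto (fun d : ℝ => (1 - d⁻¹) ^ 2) atTop (𝓝 1) := by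
    simpa using ((tendsto_inv_atTop_zero (𝕜 := ℝ)).const_sub 1).pow 2
  have hhi := tendsto_rpow_const_div_add_atTop (b := 4 / 3) (by norm_num) 4 4
  filter_upwards [eventually_abs_mul_inv_sub_one_lt tendsto_ownnRatio hlo hhi hε,
    eventually_ge_atTop 1] with d hsqueeze hd γ ⟨hγ0, hγ⟩
  exact hsqueeze _ (one_sub_inv_sq_le_PR hd hγ0 hγ) (PR_le_four_thirds_rpow hd hγ0 hγ)

/-- The OWNN-to-kNN risk ratio `2^{4/(d+4)}·((d+2)/(d+4))^{(2d+4)/(d+4)}`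
tends to `1` as `d → ∞`; combined with `inf_{γ∈[0,d/3]} PR d γ → 1`, the asymptotic
risk ratio `R(n, OWNN)/R(n, γ) = 2^{4/(d+4)}·((d+2)/(d+4))^{(2d+4)/(d+4)}·PR(d,γ)⁻¹`
tends to `1` as `d → ∞`, uniformly over `γ ∈ [0, d/3]`: in high dimensions the
performance differences among k-NN, interpolated-NN and OWNN become negligible even at
the multiplicative-constant level. -/
theorem ownn_ratio_tendsto_one :
    Tendsto (fun d : ℝ =>
        (2 : ℝ) ^ ((4 : ℝ) / (d + 4)) * ((d + 2) / (d + 4)) ^ ((2 * d + 4) / (d + 4)))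
      atTop (nhds 1) ∧
    ∀ ε : ℝ, 0 < ε → ∃ D : ℕ, ∀ d : ℕ, D ≤ d →
      ∀ γ : ℝ, γ ∈ Set.Icc (0 : ℝ) ((d : ℝ) / 3) →
        |(2 : ℝ) ^ ((4 : ℝ) / ((d : ℝ) + 4)) *
            (((d : ℝ) + 2) / ((d : ℝ) + 4)) ^ ((2 * (d : ℝ) + 4) / ((d : ℝ) + 4)) *
            (PR d γ)⁻¹ - 1| < ε :=
  ⟨tendsto_ownnRatio, fun _ hε => eventually_atTop.mp
    (tendsto_natCast_atTop_atTop.eventually (eventually_abs_ownnRatio_mul_inv_PR_sub_one_lt hε))⟩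
end
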